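/- arXiv:1302.3205 — 3 statements merged into one kernel-verified Lean document; each statement's English description precedes it below -/
import Mathlib

section
/- (Open Mapping) Let (X, τ_X) and (Y, τ_Y) be topological spaces, let f : X → Y be a continuous function, and assume that for each x ∈ X the set x^* is closed in the ultrafilter space βX_d. Then f is an open map if and only if for every x ∈ X, (f(x))^* ⊆ f^β(x^*), i.e., every ultrafilter q ∈ (f(x))^* equals the pushforward f^β(p) of some p ∈ x^*. (Theorem 3.6) -/
/-!
A map is open iff `𝓝 (f x) ≤ map f (𝓝 x)` for all `x`, and an ultrafilter `q` lies below
`map f F` iff it is the image of an ultrafilter below `F`: any ultrafilter finer than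
`F ⊓ comap f q` maps onto `q`. Testing `≤` against ultrafilters gives the theorem.
-/

open Filter Topology

/-- `near x` is `x^*`: the set of ultrafilters `p` on `X` (points of `βX_d`)
such that `x ∈ cl_X A` for every `A ∈ p`, i.e. the ultrafilters near to `x`. -/
def near {X : Type*} [TopologicalSpace X] (x : X) : Set (Ultrafilter X) :=
  {p | ∀ A ∈ p, x ∈ closure A}

theorem mem_near_iff {X : Type*} [TopologicalSpace X] {x : X} {p : Ultrafilter X} :
    p ∈ near x ↔ ↑p ≤ 𝓝 x :=
  clusterPt_iff_forall_mem_closure.symm.trans p.clusterPt_iff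

theorem Ultrafilter.le_map_iff_exists_map_eq {α β : Type*} {f : α → β} {F : Filter α}
    {q : Ultrafilter β} : ↑q ≤ F.map f ↔ ∃ p : Ultrafilter α, ↑p ≤ F ∧ p.map f = q := by
  constructor
  · intro hq
    have hpull : (F ⊓ Filter.comap f q).map f = q := by
      rw [Filter.push_pull, inf_eq_right.2 hq]
    have : NeBot (F ⊓ Filter.comap f q) := (map_neBot_iff f).1 (by rw [hpull]; exact q.neBot)
    refine ⟨Ultrafilter.of (F ⊓ Filter.comap f q), (Ultrafilter.of_le _).trans inf_le_left, ?_⟩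
    rw [← Ultrafilter.coe_le_coe, Ultrafilter.coe_map]
    exact (map_mono (Ultrafilter.of_le _)).trans hpull.le
  · rintro ⟨p, hpF, rfl⟩
    exact map_mono hpF

theorem Filter.le_map_iff_forall_ultrafilter {α β : Type*} {f : α → β} {F : Filter α}
    {G : Filter β} :
    G ≤ F.map f ↔ ∀ q : Ultrafilter β, ↑q ≤ G → ∃ p : Ultrafilter α, ↑p ≤ F ∧ p.map f = q := by
  simp only [le_iff_ultrafilter (f₁ := G), Ultrafilter.le_map_iff_exists_map_eq]

theorem stmt8_general {X Y : Type*} [TopologicalSpace X] [TopologicalSpace Y]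
    (f : X → Y) :
    IsOpenMap f ↔ ∀ x : X, near (f x) ⊆ Ultrafilter.map f '' near x := by
  simp only [isOpenMap_iff_nhds_le, le_map_iff_forall_ultrafilter, Set.subset_def,
    Set.mem_image, mem_near_iff]

/-- Open Mapping theorem. -/
theorem stmt8 {X Y : Type*} [TopologicalSpace X] [TopologicalSpace Y]
    (f : X → Y) (hf : Continuous f) (hcl : ∀ x : X, IsClosed (near x)) :
    IsOpenMap f ↔ ∀ x : X, near (f x) ⊆ Ultrafilter.map f '' near x :=
  stmt8_general f
end

section
/- A topological space (X, τ) is a regular T₁ space (i.e., T₃) if and only if X is T₁ and for every x ∈ X and every closed set F ⊆ X with x ∉ F, one has x^* ∩ cl_{βX_d}(F^*) = ∅, where the closure of F^* is taken in the ultrafilter space βX_d. (Theorem 4.4(4)) -/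
/-- `nearSet F` is `F^*`: the set of ultrafilters `p` on `X` such that
`cl_X A` meets `F` for every `A ∈ p`. -/
def nearSet {X : Type*} [TopologicalSpace X] (F : Set X) : Set (Ultrafilter X) :=
  {p | ∀ A ∈ p, (closure A ∩ F).Nonempty}

open Filter Topology

namespace Ultrafilter

variable {α : Type*}

theorem isClosed_setOf_coe_le (f : Filter α) : IsClosed {p : Ultrafilter α | ↑p ≤ f} := by
  simp only [Filter.le_def, Set.ofPred_forall]
  exact isClosed_biInter fun s _ ↦ ultrafilter_isClosed_basic s

theorem setOf_coe_le_eq_empty_iff {f : Filter α} : {p : Ultrafilter α | ↑p ≤ f} = ∅ ↔ f = ⊥ := by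
  rw [Set.eq_empty_iff_forall_notMem, ← not_neBot, ← exists_ultrafilter_iff]
  simp

end Ultrafilter

section

variable {X : Type*} [TopologicalSpace X]

theorem near_eq (x : X) : near x = {p : Ultrafilter X | ↑p ≤ 𝓝 x} := by
  ext p
  rw [Set.mem_ofPred_eq, ← Ultrafilter.clusterPt_iff, clusterPt_iff_forall_mem_closure]
  rfl

theorem nearSet_eq (F : Set X) : nearSet F = {p : Ultrafilter X | ↑p ≤ 𝓝ˢ F} := by
  ext p
  simp only [nearSet, Set.mem_ofPred_eq, Filter.le_def, mem_nhdsSet_iff_exists]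
  constructor
  · rintro hp s ⟨U, hU, hFU, hUs⟩
    refine p.mem_of_superset (by_contra fun hUp ↦ ?_) hUs
    obtain ⟨y, hyU, hyF⟩ := hp Uᶜ (Ultrafilter.compl_mem_iff_notMem.mpr hUp)
    rw [hU.isClosed_compl.closure_eq] at hyU
    exact hyU (hFU hyF)
  · intro hp A hA
    by_contra hAF
    have hcompl : (closure A)ᶜ ∈ p :=
      hp _ ⟨_, isClosed_closure.isOpen_compl, fun y hyF hyA ↦ hAF ⟨y, hyA, hyF⟩, subset_rfl⟩
    exact Ultrafilter.compl_mem_iff_notMem.mp hcompl (p.mem_of_superset hA subset_closure)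

theorem isClosed_nearSet (F : Set X) : IsClosed (nearSet F) := by
  rw [nearSet_eq]
  exact Ultrafilter.isClosed_setOf_coe_le _

theorem near_inter_nearSet_eq_empty_iff (x : X) (F : Set X) :
    near x ∩ nearSet F = ∅ ↔ Disjoint (𝓝ˢ F) (𝓝 x) := by
  rw [near_eq, nearSet_eq, disjoint_comm, disjoint_iff, ← Ultrafilter.setOf_coe_le_eq_empty_iff]
  simp only [le_inf_iff, Set.ofPred_and]

end

theorem stmt17 {X : Type*} [TopologicalSpace X] :
    T3Space X ↔ T1Space X ∧
      ∀ (x : X) (F : Set X), IsClosed F → x ∉ F →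
        near x ∩ closure (nearSet F) = ∅ := by
  simp only [(isClosed_nearSet _).closure_eq, near_inter_nearSet_eq_empty_iff]
  constructor
  · exact fun _ ↦ ⟨inferInstance, fun _ _ ↦ RegularSpace.regular⟩
  · rintro ⟨_, hregular⟩
    have : RegularSpace X := ⟨hregular _ _⟩
    infer_instance
end

section
/- If a topological space (X, τ) is completely regular, then for every x ∈ X and every closed set F ⊆ X with x ∉ F, one has cl_{βX_d}(x^*) ∩ cl_{βX_d}(F^*) = ∅, where the closures are taken in the ultrafilter space βX_d. (Theorem 4.4(5)) -/
open Filter Topology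

theorem Ultrafilter.isClosed_setOf_coe_le_s18 {X : Type*} (f : Filter X) :
    IsClosed {p : Ultrafilter X | ↑p ≤ f} := by
  simp only [Filter.le_def, Set.ofPred_forall]
  exact isClosed_iInter fun s => isClosed_iInter fun _ => ultrafilter_isClosed_basic s

section Near

variable {X : Type*} [TopologicalSpace X]

theorem near_subset_nearSet_singleton (x : X) : near x ⊆ nearSet {x} :=
  fun _ hp A hA => ⟨x, hp A hA, rfl⟩

theorem coe_le_nhdsSet_of_mem_nearSet {F : Set X} {p : Ultrafilter X} (hp : p ∈ nearSet F) :
    ↑p ≤ 𝓝ˢ F := by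
  intro s hs
  by_contra hsp
  obtain ⟨y, hy, hyF⟩ := hp sᶜ (Ultrafilter.compl_mem_iff_notMem.2 hsp)
  rw [closure_compl] at hy
  exact hy (subset_interior_iff_mem_nhdsSet.2 hs hyF)

theorem closure_nearSet_subset (F : Set X) :
    closure (nearSet F) ⊆ {p : Ultrafilter X | ↑p ≤ 𝓝ˢ F} :=
  closure_minimal (fun _ => coe_le_nhdsSet_of_mem_nearSet)
    (Ultrafilter.isClosed_setOf_coe_le_s18 _)

theorem closure_near_subset (x : X) : closure (near x) ⊆ {p : Ultrafilter X | ↑p ≤ 𝓝 x} := by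
  simpa only [nhdsSet_singleton] using
    (closure_mono (near_subset_nearSet_singleton x)).trans (closure_nearSet_subset {x})

end Near

theorem stmt18 {X : Type*} [TopologicalSpace X] [CompletelyRegularSpace X]
    (x : X) (F : Set X) (hF : IsClosed F) (hx : x ∉ F) :
    closure (near x) ∩ closure (nearSet F) = ∅ := by
  have hsep : Disjoint (𝓝 x) (𝓝ˢ F) := by
    rwa [disjoint_nhds_nhdsSet, hF.closure_eq]
  refine Set.eq_empty_iff_forall_notMem.2 fun p ⟨hpx, hpF⟩ => p.neBot.ne ?_
  exact disjoint_self.1 (hsep.mono (closure_near_subset x hpx) (closure_nearSet_subset F hpF))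
end
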